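/- arXiv:0812.3447 — 2 statements merged into one kernel-verified Lean document; each statement's English description precedes it below -/
import Mathlib

section
/- The second derivative of the function g(x) = (ln(1+eˣ))⁻¹ is given by g''(x) = eˣ · [2eˣ − ln(1+eˣ)] / ((1+eˣ)² · (ln(1+eˣ))³), and this quantity is strictly positive for all real x. -/
open Real

lemma L_pos (y : ℝ) : 0 < Real.log (1 + Real.exp y) :=
  Real.log_pos (by linarith [Real.exp_pos y])

lemma oneexp_pos (y : ℝ) : 0 < 1 + Real.exp y := by linarith [Real.exp_pos y]

lemma hL (y : ℝ) : HasDerivAt (fun y : ℝ => Real.log (1 + Real.exp y))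
    (Real.exp y / (1 + Real.exp y)) y :=
  ((Real.hasDerivAt_exp y).const_add 1).log (oneexp_pos y).ne'

lemma hg1 (y : ℝ) : HasDerivAt (fun y : ℝ => (Real.log (1 + Real.exp y))⁻¹)
    (-(Real.exp y / (1 + Real.exp y)) / (Real.log (1 + Real.exp y)) ^ 2) y :=
  (hL y).inv (L_pos y).ne'

lemma deriv_g : deriv (fun y : ℝ => (Real.log (1 + Real.exp y))⁻¹) =
    fun y => -(Real.exp y / (1 + Real.exp y)) / (Real.log (1 + Real.exp y)) ^ 2 :=
  funext fun y => (hg1 y).deriv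

/-- The second derivative of `g(x) = (ln(1+eˣ))⁻¹` equals
`eˣ (2eˣ − ln(1+eˣ)) / ((1+eˣ)² (ln(1+eˣ))³)`, and this is strictly positive. -/
theorem stmt_1 (x : ℝ) :
    deriv (deriv (fun y : ℝ => (Real.log (1 + Real.exp y))⁻¹)) x =
      Real.exp x * (2 * Real.exp x - Real.log (1 + Real.exp x)) /
        ((1 + Real.exp x) ^ 2 * (Real.log (1 + Real.exp x)) ^ 3) ∧
    0 < Real.exp x * (2 * Real.exp x - Real.log (1 + Real.exp x)) /
        ((1 + Real.exp x) ^ 2 * (Real.log (1 + Real.exp x)) ^ 3) := by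
  have he := Real.exp_pos x
  have hd := oneexp_pos x
  have hLp := L_pos x
  constructor
  · rw [deriv_g]
    -- numerator: fun y => -(exp y / (1 + exp y))
    have hnum : HasDerivAt (fun y : ℝ => -(Real.exp y / (1 + Real.exp y)))
        (-((Real.exp x * (1 + Real.exp x) - Real.exp x * Real.exp x) / (1 + Real.exp x) ^ 2)) x :=
      ((Real.hasDerivAt_exp x).div ((Real.hasDerivAt_exp x).const_add 1) hd.ne').neg
    -- denominator: fun y => (log (1 + exp y))^2
    have hden : HasDerivAt (fun y : ℝ => (Real.log (1 + Real.exp y)) ^ 2)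
        (2 * Real.log (1 + Real.exp x) ^ 1 * (Real.exp x / (1 + Real.exp x))) x := by
      simpa using (hL x).fun_pow 2
    have h2 := hnum.fun_div hden (by positivity)
    rw [h2.deriv]
    have h1 : (1 + Real.exp x) ≠ 0 := hd.ne'
    have h2' : Real.log (1 + Real.exp x) ≠ 0 := hLp.ne'
    field_simp
    ring
  · have hlog : Real.log (1 + Real.exp x) < 2 * Real.exp x := by
      have := Real.log_le_sub_one_of_pos hd
      linarith
    apply div_pos (mul_pos he (by linarith)) (by positivity)
end

section
/- If F : ℝ → [0,1] is the cdf of a random variable whose density f is log-concave, then the complementary cdf F̄(x) = 1 − F(x) is log-concave and nonincreasing. -/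
open MeasureTheory

/-- A nonnegative function `g : ℝ → ℝ` is log-concave (multiplicative form). -/
def IsLogConcave (g : ℝ → ℝ) : Prop :=
  (∀ x, 0 ≤ g x) ∧
    ∀ x y a b : ℝ, 0 ≤ a → 0 ≤ b → a + b = 1 →
      g x ^ a * g y ^ b ≤ g (a * x + b * y)

noncomputable def tailG (f : ℝ → ℝ) (r : ℝ) : ℝ := ∫ t in Set.Ioi r, f t

section Aux

variable {f : ℝ → ℝ}

lemma fourpoint (hfnn : ∀ x, 0 ≤ f x) (hflc : IsLogConcave f)
    {c p d : ℝ} (hcp : c ≤ p) (hpd : p ≤ d) :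
    f c * f d ≤ f p * f (c + d - p) := by
  rcases eq_or_lt_of_le (hcp.trans hpd) with h | h
  · have hpc : p = c := le_antisymm (by rw [h]; exact hpd) hcp
    have hdc : d = c := h.symm
    rw [hpc, hdc, show c + c - c = c by ring]
  · set l := (d - p) / (d - c) with hl
    have hdc : 0 < d - c := by linarith
    have hl0 : 0 ≤ l := div_nonneg (by linarith) hdc.le
    have hl1 : 0 ≤ 1 - l := by
      have : l ≤ 1 := by rw [hl, div_le_one hdc]; linarith
      linarith
    have h1 := hflc.2 c d l (1 - l) hl0 hl1 (by ring)
    have h2 := hflc.2 c d (1 - l) l hl1 hl0 (by ring)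
    have hl' : l * (d - c) = d - p := by rw [hl]; exact div_mul_cancel₀ _ hdc.ne'
    have hp : l * c + (1 - l) * d = p := by
      field_simp [hl]
      linear_combination -hl'
    have hq : (1 - l) * c + l * d = c + d - p := by
      field_simp [hl]
      linear_combination hl'
    rw [hp] at h1
    rw [hq] at h2
    have hc1 : f c ^ l * f c ^ (1 - l) = f c := by
      rw [← Real.rpow_add' (hfnn c) (by norm_num)]
      norm_num
    have hd1 : f d ^ (1 - l) * f d ^ l = f d := by
      rw [← Real.rpow_add' (hfnn d) (by norm_num)]
      norm_num
    calc f c * f d = (f c ^ l * f d ^ (1 - l)) * (f c ^ (1 - l) * f d ^ l) := by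
          rw [show (f c ^ l * f d ^ (1 - l)) * (f c ^ (1 - l) * f d ^ l)
              = (f c ^ l * f c ^ (1 - l)) * (f d ^ (1 - l) * f d ^ l) by ring, hc1, hd1]
      _ ≤ f p * f (c + d - p) := by
          exact mul_le_mul h1 h2 (mul_nonneg (Real.rpow_nonneg (hfnn c) _) (Real.rpow_nonneg (hfnn d) _)) (hfnn p)

lemma tailG_nonneg (hfnn : ∀ x, 0 ≤ f x) (r : ℝ) : 0 ≤ tailG f r :=
  setIntegral_nonneg measurableSet_Ioi fun x _ => hfnn x

lemma tailG_anti (hfnn : ∀ x, 0 ≤ f x) (hfint : Integrable f) : Antitone (tailG f) :=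
  fun x y hxy => setIntegral_mono_set hfint.integrableOn
    (Filter.Eventually.of_forall fun t => hfnn t)
    (HasSubset.Subset.eventuallyLE (Set.Ioi_subset_Ioi hxy))

lemma tailG_translate (δ r : ℝ) : (∫ t in Set.Ioi r, f (t + δ)) = tailG f (r + δ) := by
  have h := (measurePreserving_add_right volume δ).setIntegral_preimage_emb
    (measurableEmbedding_addRight δ) f (Set.Ioi (r + δ))
  have hpre : (· + δ) ⁻¹' Set.Ioi (r + δ) = Set.Ioi r := by
    ext t; simp
  rw [hpre] at h
  exact h

lemma tailG_translate_Ioc (δ x w : ℝ) :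
    (∫ t in Set.Ioc x w, f (t + δ)) = ∫ t in Set.Ioc (x + δ) (w + δ), f t := by
  have h := (measurePreserving_add_right volume δ).setIntegral_preimage_emb
    (measurableEmbedding_addRight δ) f (Set.Ioc (x + δ) (w + δ))
  have hpre : (· + δ) ⁻¹' Set.Ioc (x + δ) (w + δ) = Set.Ioc x w := by
    ext t; simp
  rw [hpre] at h
  exact h

lemma tailG_shift (hfnn : ∀ x, 0 ≤ f x) (hfint : Integrable f) (hflc : IsLogConcave f)
    {s δ r : ℝ} (hδ : 0 ≤ δ) (h : s + δ ≤ r) :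
    f s * tailG f r ≤ f (s + δ) * tailG f (r - δ) := by
  have h2' : (∫ t in Set.Ioi r, f (t + -δ)) = tailG f (r - δ) := by
    rw [tailG_translate (-δ) r]
    norm_num [sub_eq_add_neg]
  have h1 : f s * tailG f r = ∫ t in Set.Ioi r, f s * f t :=
    (integral_const_mul _ _).symm
  have h2 : f (s + δ) * tailG f (r - δ) = ∫ t in Set.Ioi r, f (s + δ) * f (t - δ) := by
    rw [← h2', ← integral_const_mul]
    simp only [sub_eq_add_neg]
  rw [h1, h2]
  apply setIntegral_mono_on
  · exact (hfint.const_mul _).integrableOn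
  · exact ((hfint.comp_sub_right δ).const_mul _).integrableOn
  · exact measurableSet_Ioi
  · intro t ht
    have ht' : s + δ ≤ t := h.trans (le_of_lt ht)
    have := fourpoint hfnn hflc (c := s) (p := s + δ) (d := t) (by linarith) ht'
    have he : s + t - (s + δ) = t - δ := by ring
    rwa [he] at this

lemma tailG_split (hfint : Integrable f) {a w : ℝ} (haw : a ≤ w) :
    tailG f a = (∫ t in Set.Ioc a w, f t) + tailG f w := by
  rw [tailG, tailG, ← Set.Ioc_union_Ioi_eq_Ioi haw]
  exact setIntegral_union (Set.Ioc_disjoint_Ioi le_rfl) measurableSet_Ioi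
    hfint.integrableOn hfint.integrableOn

lemma tailG_pair (hfnn : ∀ x, 0 ≤ f x) (hfint : Integrable f) (hflc : IsLogConcave f)
    {x y u : ℝ} (hxy : x ≤ y) (hu : 0 ≤ u) :
    tailG f x * tailG f (y + u) ≤ tailG f (x + u) * tailG f y := by
  set δ := y - x with hδdef
  have hδ : 0 ≤ δ := by simp [hδdef]; linarith
  have key : (∫ s in Set.Ioc x (x + u), f s) * tailG f (y + u)
      ≤ tailG f (x + u) * ∫ s in Set.Ioc y (y + u), f s := by
    have e1 : (∫ s in Set.Ioc x (x + u), f s) * tailG f (y + u)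
        = ∫ s in Set.Ioc x (x + u), f s * tailG f (y + u) :=
      (integral_mul_const _ _).symm
    have mono : (∫ s in Set.Ioc x (x + u), f s * tailG f (y + u))
        ≤ ∫ s in Set.Ioc x (x + u), f (s + δ) * tailG f (x + u) := by
      apply setIntegral_mono_on
      · exact (hfint.mul_const _).integrableOn
      · exact ((hfint.comp_add_right δ).mul_const _).integrableOn
      · exact measurableSet_Ioc
      · intro s hs
        have h1 : s + δ ≤ y + u := by
          have := hs.2
          simp only [hδdef]
          linarith
        have := tailG_shift hfnn hfint hflc hδ h1
        have he : y + u - δ = x + u := by simp [hδdef]; ring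
        rwa [he] at this
    have e2 : (∫ s in Set.Ioc x (x + u), f (s + δ) * tailG f (x + u))
        = tailG f (x + u) * ∫ s in Set.Ioc y (y + u), f s := by
      rw [integral_mul_const, tailG_translate_Ioc δ x (x + u)]
      rw [show x + δ = y by simp [hδdef], show x + u + δ = y + u by simp [hδdef]; ring]
      ring
    calc (∫ s in Set.Ioc x (x + u), f s) * tailG f (y + u)
        = ∫ s in Set.Ioc x (x + u), f s * tailG f (y + u) := e1
      _ ≤ ∫ s in Set.Ioc x (x + u), f (s + δ) * tailG f (x + u) := mono
      _ = tailG f (x + u) * ∫ s in Set.Ioc y (y + u), f s := e2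
  have ex := tailG_split hfint (show x ≤ x + u by linarith)
  have ey := tailG_split hfint (show y ≤ y + u by linarith)
  rw [ex, ey]
  nlinarith [key]

lemma tailG_midpoint (hfnn : ∀ x, 0 ≤ f x) (hfint : Integrable f) (hflc : IsLogConcave f)
    {x y : ℝ} (hxy : x ≤ y) :
    tailG f x * tailG f y ≤ tailG f ((x + y) / 2) * tailG f ((x + y) / 2) := by
  have h := tailG_pair hfnn hfint hflc (x := x) (y := (x + y) / 2) (u := (y - x) / 2)
    (by linarith) (by linarith)
  have h1 : (x + y) / 2 + (y - x) / 2 = y := by ring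
  have h2 : x + (y - x) / 2 = (x + y) / 2 := by ring
  rwa [h1, h2] at h

lemma tailG_midpoint' (hfnn : ∀ x, 0 ≤ f x) (hfint : Integrable f) (hflc : IsLogConcave f)
    (x y : ℝ) :
    tailG f x * tailG f y ≤ tailG f ((x + y) / 2) * tailG f ((x + y) / 2) := by
  rcases le_total x y with h | h
  · exact tailG_midpoint hfnn hfint hflc h
  · have := tailG_midpoint hfnn hfint hflc h
    have hc : (y + x) / 2 = (x + y) / 2 := by ring
    rw [hc] at this
    linarith [this]

lemma tailG_continuous (hfint : Integrable f) : Continuous (tailG f) := by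
  have hkey : ∀ x : ℝ, tailG f x = tailG f 0 - ∫ t in (0:ℝ)..x, f t := by
    intro x
    rcases le_total (0:ℝ) x with h | h
    · have hs := tailG_split hfint h
      rw [intervalIntegral.integral_of_le h]
      rw [show volume.restrict (Set.Ioc 0 x) = volume.restrict (Set.Ioc 0 x) from rfl]
      linarith [hs]
    · have hs := tailG_split hfint h
      rw [intervalIntegral.integral_of_ge h]
      linarith [hs]
  have : Continuous fun x : ℝ => tailG f 0 - ∫ t in (0:ℝ)..x, f t := by
    apply continuous_const.sub
    exact intervalIntegral.continuous_primitive (fun a b => hfint.intervalIntegrable) 0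
  convert this using 1
  exact funext hkey

lemma tailG_dyadic (hfnn : ∀ x, 0 ≤ f x) (hfint : Integrable f) (hflc : IsLogConcave f)
    {x y : ℝ} (hx : 0 < tailG f x) (hy : 0 < tailG f y) :
    ∀ n k : ℕ, k ≤ 2 ^ n →
      tailG f x ^ ((k : ℝ) / 2 ^ n) * tailG f y ^ (1 - (k : ℝ) / 2 ^ n)
        ≤ tailG f (((k : ℝ) / 2 ^ n) * x + (1 - (k : ℝ) / 2 ^ n) * y) := by
  intro n
  induction n with
  | zero =>
    intro k hk
    interval_cases k
    · norm_num
    · norm_num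
  | succ n ih =>
    intro k hk
    rcases Nat.even_or_odd k with ⟨m, hm⟩ | ⟨m, hm⟩
    · -- k = m + m
      have hm2 : m ≤ 2 ^ n := by omega
      have e : (k : ℝ) / 2 ^ (n + 1) = (m : ℝ) / 2 ^ n := by
        subst hm
        push_cast
        rw [pow_succ]
        field_simp
        ring
      rw [e]
      exact ih m hm2
    · -- k = 2 * m + 1
      have hm1 : m + 1 ≤ 2 ^ n := by omega
      have hm0 : m ≤ 2 ^ n := by omega
      set s : ℝ := (m : ℝ) / 2 ^ n with hs
      set t : ℝ := ((m : ℝ) + 1) / 2 ^ n with ht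
      have h1 := ih m hm0
      have h2 := ih (m + 1) hm1
      rw [show (((m : ℕ) + 1 : ℕ) : ℝ) = (m : ℝ) + 1 by push_cast; ring] at h2
      set c : ℝ := (k : ℝ) / 2 ^ (n + 1) with hc
      have hst : s + t = c + c := by
        rw [hs, ht, hc, hm]
        push_cast
        rw [pow_succ]
        field_simp
        ring
      set zs : ℝ := s * x + (1 - s) * y with hzs
      set zt : ℝ := t * x + (1 - t) * y with hzt
      have hz : (zs + zt) / 2 = c * x + (1 - c) * y := by
        rw [hzs, hzt]
        linear_combination ((x - y) / 2) * hst
      set M : ℝ := tailG f (c * x + (1 - c) * y) with hM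
      have hmid : tailG f zs * tailG f zt ≤ M * M := by
        have := tailG_midpoint' hfnn hfint hflc zs zt
        rwa [hz] at this
      set B : ℝ := tailG f x ^ c * tailG f y ^ (1 - c) with hB
      have hBB : B * B ≤ M * M := by
        have hchain : (tailG f x ^ s * tailG f y ^ (1 - s))
            * (tailG f x ^ t * tailG f y ^ (1 - t)) ≤ tailG f zs * tailG f zt :=
          mul_le_mul h1 h2 (by positivity) (tailG_nonneg hfnn zs)
        have hBsq : B * B
            = (tailG f x ^ s * tailG f y ^ (1 - s))
              * (tailG f x ^ t * tailG f y ^ (1 - t)) := by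
          rw [hB]
          rw [show tailG f x ^ c * tailG f y ^ (1 - c) * (tailG f x ^ c * tailG f y ^ (1 - c))
              = (tailG f x ^ c * tailG f x ^ c) * (tailG f y ^ (1 - c) * tailG f y ^ (1 - c))
              by ring]
          rw [show tailG f x ^ s * tailG f y ^ (1 - s) * (tailG f x ^ t * tailG f y ^ (1 - t))
              = (tailG f x ^ s * tailG f x ^ t) * (tailG f y ^ (1 - s) * tailG f y ^ (1 - t))
              by ring]
          rw [← Real.rpow_add hx, ← Real.rpow_add hy, ← Real.rpow_add hx, ← Real.rpow_add hy]
          rw [show c + c = s + t from hst.symm]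
          rw [show (1 - c) + (1 - c) = (1 - s) + (1 - t) by linarith [hst]]
        rw [hBsq]
        exact hchain.trans hmid
      have hBnn : 0 ≤ B := by positivity
      have hMnn : 0 ≤ M := tailG_nonneg hfnn _
      nlinarith [hBB, hBnn, hMnn]

lemma tailG_main (hfnn : ∀ x, 0 ≤ f x) (hfint : Integrable f) (hflc : IsLogConcave f)
    (x y a b : ℝ) (ha : 0 ≤ a) (hb : 0 ≤ b) (hab : a + b = 1) :
    tailG f x ^ a * tailG f y ^ b ≤ tailG f (a * x + b * y) := by
  have hb' : b = 1 - a := by linarith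
  subst hb'
  have ha1 : a ≤ 1 := by linarith
  rcases eq_or_lt_of_le (tailG_nonneg hfnn x) with hx | hx
  · rcases eq_or_ne a 0 with ha0 | ha0
    · subst ha0
      norm_num
    · rw [← hx, Real.zero_rpow ha0, zero_mul]
      exact tailG_nonneg hfnn _
  rcases eq_or_lt_of_le (tailG_nonneg hfnn y) with hy | hy
  · rcases eq_or_ne a 1 with ha1' | ha1'
    · subst ha1'
      norm_num
    · rw [← hy, Real.zero_rpow (by intro h; apply ha1'; linarith), mul_zero]
      exact tailG_nonneg hfnn _
  -- both positive: dyadic approximation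
  set G := tailG f with hG
  set tseq : ℕ → ℝ := fun n => ((⌊a * 2 ^ n⌋₊ : ℝ) / 2 ^ n) with htseq
  have hclaim : ∀ n : ℕ, G x ^ tseq n * G y ^ (1 - tseq n)
      ≤ G (tseq n * x + (1 - tseq n) * y) := by
    intro n
    apply tailG_dyadic hfnn hfint hflc hx hy n
    have h2n : (0:ℝ) < 2 ^ n := by positivity
    have : a * 2 ^ n ≤ ((2 ^ n : ℕ) : ℝ) := by
      push_cast
      nlinarith
    calc ⌊a * 2 ^ n⌋₊ ≤ ⌊((2 ^ n : ℕ) : ℝ)⌋₊ := Nat.floor_mono this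
      _ = 2 ^ n := Nat.floor_natCast _
  have hTlim : Filter.Tendsto tseq Filter.atTop (nhds a) := by
    have h2pow : Filter.Tendsto (fun n : ℕ => (2:ℝ) ^ n) Filter.atTop Filter.atTop :=
      tendsto_pow_atTop_atTop_of_one_lt one_lt_two
    have := (tendsto_nat_floor_mul_div_atTop ha).comp h2pow
    exact this
  set Φ : ℝ → ℝ := fun u => Real.exp (Real.log (G x) * u) * Real.exp (Real.log (G y) * (1 - u))
    with hΦdef
  have hΦcont : Continuous Φ := by
    apply Continuous.mul
    · exact Real.continuous_exp.comp (continuous_const.mul continuous_id)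
    · exact Real.continuous_exp.comp (continuous_const.mul (continuous_const.sub continuous_id))
  have hrw : ∀ u : ℝ, G x ^ u * G y ^ (1 - u) = Φ u := by
    intro u
    rw [hΦdef]
    rw [Real.rpow_def_of_pos hx, Real.rpow_def_of_pos hy]
  set Ψ : ℝ → ℝ := fun u => G (u * x + (1 - u) * y) with hΨdef
  have hΨcont : Continuous Ψ := by
    apply (tailG_continuous hfint).comp
    exact (continuous_id.mul continuous_const).add
      ((continuous_const.sub continuous_id).mul continuous_const)
  have hle : Φ a ≤ Ψ a := by
    refine le_of_tendsto_of_tendsto' ((hΦcont.tendsto a).comp hTlim)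
      ((hΨcont.tendsto a).comp hTlim) ?_
    intro n
    simp only [Function.comp_apply, hΨdef]
    rw [← hrw]
    exact hclaim n
  calc G x ^ a * G y ^ (1 - a) = Φ a := hrw a
    _ ≤ Ψ a := hle
    _ = G (a * x + (1 - a) * y) := rfl

end Aux

/-- If `F` is the cdf of a random variable with log-concave density `f`, then the
complementary cdf `F̄(x) = 1 − F(x)` is log-concave and nonincreasing. -/
theorem stmt_15 (f : ℝ → ℝ) (hfnn : ∀ x, 0 ≤ f x)
    (hfint : Integrable f) (hfone : ∫ x, f x = 1)
    (hflc : IsLogConcave f)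
    (F : ℝ → ℝ) (hF : ∀ x, F x = ∫ t in Set.Iic x, f t) :
    Antitone (fun x => 1 - F x) ∧ IsLogConcave (fun x => 1 - F x) := by
  have hGdef : ∀ x, 1 - F x = tailG f x := by
    intro x
    have hcompl := integral_add_compl (s := Set.Iic x) measurableSet_Iic hfint
    rw [Set.compl_Iic] at hcompl
    rw [hF x]
    have : (∫ t in Set.Iic x, f t) + tailG f x = 1 := by
      rw [tailG]
      rw [hcompl]
      exact hfone
    linarith
  constructor
  · intro u v huv
    simp only
    rw [hGdef u, hGdef v]
    exact tailG_anti hfnn hfint huv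
  · constructor
    · intro x
      simp only
      rw [hGdef x]
      exact tailG_nonneg hfnn x
    · intro x y a b ha hb hab
      simp only
      rw [hGdef x, hGdef y, hGdef (a * x + b * y)]
      exact tailG_main hfnn hfint hflc x y a b ha hb hab
end
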